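/- In the setting of the finitely generated version of the construction (d_G finitely generated by the finite set A_G, X a finite metric space, d' a metric on A_G ⊔ X extending d_G restricted to A_G and d_X, and d'' the greatest amalgam metric on G ⊔ X over A_G, extended to d on S = G ⊔ X ⊔ X⁻¹ as in the Graev construction), define γ on G ∗ F(X) by γ(x,y) = inf{ d(x₁,y₁) + … + d(xₙ,yₙ) : n ∈ ℕ, x₁,y₁,…,xₙ,yₙ ∈ A_G ⊔ X ⊔ X⁻¹, x = x₁⋯xₙ, y = y₁⋯yₙ }. Then γ = δ, where δ(u,v) = inf{ ρ(u*,v*) : u*,v* words over S of equal length with (u*)' = u, (v*)' = v }; moreover the infimum in the definition of γ is attained, so δ is a finitely generated metric with generating set A_G ⊔ X ⊔ X⁻¹. -/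

import Mathlib

open Monoid

/-- A (real-valued) metric on a type. -/
def IsMetricD {α : Type*} (d : α → α → ℝ) : Prop :=
  (∀ x y, d x y = 0 ↔ x = y) ∧ (∀ x y, d x y = d y x) ∧
  (∀ x y z, d x z ≤ d x y + d y z)

/-- Two-sided invariance of a distance function on a group. -/
def IsBiInvariant {G : Type*} [Group G] (d : G → G → ℝ) : Prop :=
  ∀ g h x y : G, d (g * x * h) (g * y * h) = d x y

/-- The free product `G ∗ F(X)`. -/
abbrev FP (G X : Type*) [Group G] := Monoid.Coprod G (FreeGroup X)

/-- The alphabet `S = G ⊔ X ⊔ X⁻¹`. -/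
abbrev Alphabet (G X : Type*) := G ⊕ (X ⊕ X)

/-- Canonical image of a letter in the free product. -/
def toFP {G X : Type*} [Group G] : Alphabet G X → FP G X
  | Sum.inl g => Coprod.inl g
  | Sum.inr (Sum.inl x) => Coprod.inr (FreeGroup.of x)
  | Sum.inr (Sum.inr x) => (Coprod.inr (FreeGroup.of x) : FP G X)⁻¹

/-- For a word `w` over `S`, `wordProd w` is `w'`, the product of the images of its letters. -/
def wordProd {G X : Type*} [Group G] (w : List (Alphabet G X)) : FP G X :=
  (w.map toFP).prod

/-- `ρ(v,w) = d(v₁,w₁) + … + d(vₙ,wₙ)`. -/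
def rho {α : Type*} (d : α → α → ℝ) (v w : List α) : ℝ :=
  (List.zipWith d v w).sum

/-- The Graev pre-metric `δ` on the free product. -/
noncomputable def graevDelta {G X : Type*} [Group G]
    (d : Alphabet G X → Alphabet G X → ℝ) (u v : FP G X) : ℝ :=
  sInf { r | ∃ w₁ w₂ : List (Alphabet G X), w₁.length = w₂.length ∧
    wordProd w₁ = u ∧ wordProd w₂ = v ∧ r = rho d w₁ w₂ }

/-- The extension `d` of `d'` from `G ⊔ X` to `S = G ⊔ X ⊔ X⁻¹`. -/
noncomputable def extD {G X : Type*} [Group G] (d' : (G ⊕ X) → (G ⊕ X) → ℝ) :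
    Alphabet G X → Alphabet G X → ℝ
  | Sum.inl g, Sum.inl h => d' (Sum.inl g) (Sum.inl h)
  | Sum.inl g, Sum.inr (Sum.inl x) => d' (Sum.inl g) (Sum.inr x)
  | Sum.inr (Sum.inl x), Sum.inl g => d' (Sum.inr x) (Sum.inl g)
  | Sum.inr (Sum.inl x), Sum.inr (Sum.inl y) => d' (Sum.inr x) (Sum.inr y)
  | Sum.inl g, Sum.inr (Sum.inr x) => d' (Sum.inl g⁻¹) (Sum.inr x)
  | Sum.inr (Sum.inr x), Sum.inl g => d' (Sum.inr x) (Sum.inl g⁻¹)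
  | Sum.inr (Sum.inr x), Sum.inr (Sum.inr y) => d' (Sum.inr x) (Sum.inr y)
  | Sum.inr (Sum.inl x), Sum.inr (Sum.inr y) =>
      sInf { r | ∃ c : G, r = d' (Sum.inr x) (Sum.inl c) + d' (Sum.inl c⁻¹) (Sum.inr y) }
  | Sum.inr (Sum.inr x), Sum.inr (Sum.inl y) =>
      sInf { r | ∃ c : G, r = d' (Sum.inr y) (Sum.inl c) + d' (Sum.inl c⁻¹) (Sum.inr x) }

/-- Formal inverse of a letter of `S`. -/
def formalInv {G X : Type*} [Group G] : Alphabet G X → Alphabet G X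
  | Sum.inl g => Sum.inl g⁻¹
  | Sum.inr (Sum.inl x) => Sum.inr (Sum.inr x)
  | Sum.inr (Sum.inr x) => Sum.inr (Sum.inl x)

/-- Admissible adjacent pair in an irreducible word. -/
def okPair {G X : Type*} [Group G] : Alphabet G X → Alphabet G X → Prop
  | Sum.inl _, Sum.inl _ => False
  | Sum.inr x, Sum.inr y => Sum.inr y ≠ formalInv (Sum.inr x : Alphabet G X)
  | _, _ => True

/-- A word over `S` is irreducible if no two adjacent letters lie in `G`
and no two adjacent letters of `X ⊔ X⁻¹` are mutually inverse. -/
def IsIrreducibleWord {G X : Type*} [Group G] (w : List (Alphabet G X)) : Prop :=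
  List.Chain' okPair w

/-- A finitely generated metric on a group, with generating set `A`. -/
def IsFinGenMetric {G : Type*} [Group G] (d : G → G → ℝ) (A : Set G) : Prop :=
  A.Finite ∧ (1 : G) ∈ A ∧ (∀ a ∈ A, a⁻¹ ∈ A) ∧
  ∀ a b : G, IsLeast { r | ∃ l m : List G, l.length = m.length ∧
    (∀ x ∈ l, x ∈ A) ∧ (∀ y ∈ m, y ∈ A) ∧ l.prod = a ∧ m.prod = b ∧
    r = (List.zipWith d l m).sum } (d a b)

/-- The greatest amalgam metric `d''` on `G ⊔ X` over `A_G`, extending `d_G` and `d'`. -/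
noncomputable def amalgD {G X : Type*} [Group G] (dG : G → G → ℝ) (A : Set G)
    (d' : (↥A ⊕ X) → (↥A ⊕ X) → ℝ) : (G ⊕ X) → (G ⊕ X) → ℝ
  | Sum.inl g, Sum.inl h => dG g h
  | Sum.inr x, Sum.inr y => d' (Sum.inr x) (Sum.inr y)
  | Sum.inr x, Sum.inl g =>
      sInf { r | ∃ g₀ : A, r = d' (Sum.inr x) (Sum.inl g₀) + dG (g₀ : G) g }
  | Sum.inl g, Sum.inr x =>
      sInf { r | ∃ g₀ : A, r = d' (Sum.inr x) (Sum.inl g₀) + dG (g₀ : G) g }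

/-- The set of letters of the alphabet `S = G ⊔ X ⊔ X⁻¹` lying in `A_G ⊔ X ⊔ X⁻¹`. -/
def genSetS {G X : Type*} (A : Set G) : Set (Alphabet G X) :=
  { s | Sum.elim (fun g : G => g ∈ A) (fun _ => True) s }

/-- The finitely generated pre-metric `γ` on `G ∗ F(X)`: the infimum of `ρ` over pairs of
equal-length words whose letters come from `A_G ⊔ X ⊔ X⁻¹`. -/
noncomputable def gammaFG {G X : Type*} [Group G]
    (d : Alphabet G X → Alphabet G X → ℝ) (A : Set G) (u v : FP G X) : ℝ :=
  sInf { r | ∃ l m : List (Alphabet G X), l.length = m.length ∧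
    (∀ s ∈ l, s ∈ genSetS (X := X) A) ∧ (∀ s ∈ m, s ∈ genSetS (X := X) A) ∧
    wordProd l = u ∧ wordProd m = v ∧ r = rho d l m }

/-!
Write `γ` for the infimum over words with letters in `A_G ⊔ X ⊔ X⁻¹`. Its values are sums taken
from the finite set of nonnegative reals `d(A_G ⊔ X ⊔ X⁻¹, A_G ⊔ X ⊔ X⁻¹)`, and the additive
monoid generated by such a set is partially well-ordered, so the infimum is attained. Attainment
makes `γ` subadditive under concatenation, whence left invariance and the triangle inequality.

The only estimate that uses the amalgam is `γ(s', t') ≤ d(s, t)` for single letters `s, t` of `S`.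
For `g ∈ G` and `x ∈ X`, pick `g₀ ∈ A_G` attaining `d''(x, g)`; then `g = g₀ · g₀⁻¹g` against
`x = x · 1` gives `γ(g, x) ≤ d'(x, g₀) + d_G(g₀⁻¹g, 1) = d(g, x)`. By subadditivity `γ(u*', v*')`
is then at most `ρ(u*, v*)` for arbitrary words, so `γ = δ`. Finally `δ(u, v) = 0` forces the
minimising words to coincide letter by letter, because `d''(x, ·)` is bounded away from `0` on `G`
(`A_G` is finite).
-/

section Rho

variable {α : Type*} {d : α → α → ℝ}

@[simp] theorem rho_nil_left (m : List α) : rho d [] m = 0 := rfl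

@[simp] theorem rho_cons_cons (a b : α) (l m : List α) :
    rho d (a :: l) (b :: m) = d a b + rho d l m := by
  simp [rho]

theorem rho_append {l₁ m₁ : List α} (l₂ m₂ : List α) (h : l₁.length = m₁.length) :
    rho d (l₁ ++ l₂) (m₁ ++ m₂) = rho d l₁ m₁ + rho d l₂ m₂ := by
  rw [rho, List.zipWith_append h, List.sum_append, rho, rho]

theorem rho_self (h : ∀ a, d a a = 0) (l : List α) : rho d l l = 0 := by
  simp [rho, List.zipWith_self, h]

theorem rho_comm (h : ∀ a b, d a b = d b a) (l m : List α) : rho d l m = rho d m l := by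
  unfold rho
  rw [List.zipWith_comm]
  simp only [h]

theorem rho_map {β : Type*} (f : β → α) (l m : List β) :
    rho d (l.map f) (m.map f) = rho (fun a b => d (f a) (f b)) l m := by
  rw [rho, List.zipWith_map, rho]

theorem rho_le_rho {d' : α → α → ℝ} :
    ∀ {l m : List α}, (∀ a ∈ l, ∀ b ∈ m, d a b ≤ d' a b) → rho d l m ≤ rho d' l m
  | a :: l, b :: m, h => by
    simpa using add_le_add (h a (by simp) b (by simp))
      (rho_le_rho fun a ha b hb => h a (by simp [ha]) b (by simp [hb]))
  | [], _, _ | _ :: _, [], _ => by simp [rho]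

theorem rho_mem_closure {P : Set α} :
    ∀ {l m : List α}, (∀ a ∈ l, a ∈ P) → (∀ b ∈ m, b ∈ P) →
      rho d l m ∈ AddSubmonoid.closure (Set.image2 d P P)
  | a :: l, b :: m, hl, hm => by
    rw [rho_cons_cons]
    refine add_mem (AddSubmonoid.subset_closure ⟨a, hl a (by simp), b, hm b (by simp), rfl⟩)
      (rho_mem_closure (fun a ha => hl a (by simp [ha])) (fun b hb => hm b (by simp [hb])))
  | [], _, _, _ | _ :: _, [], _, _ => by simp [rho, zero_mem]

theorem rho_nonneg (h : ∀ a b, 0 ≤ d a b) : ∀ l m : List α, 0 ≤ rho d l m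
  | a :: l, b :: m => by simpa using add_nonneg (h a b) (rho_nonneg h l m)
  | [], _ | _ :: _, [] => by simp [rho]

theorem eq_of_rho_eq_zero (h : ∀ a b, 0 ≤ d a b) (hd : ∀ a b, d a b = 0 → a = b) :
    ∀ {l m : List α}, l.length = m.length → rho d l m = 0 → l = m
  | a :: l, b :: m, hlen, h0 => by
    rw [rho_cons_cons] at h0
    have hab : d a b = 0 := le_antisymm (by linarith [rho_nonneg h l m]) (h a b)
    have hlm : rho d l m = 0 := by linarith
    rw [hd a b hab, eq_of_rho_eq_zero h hd (by simpa using hlen) hlm]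
  | [], [], _, _ => rfl
  | [], _ :: _, hlen, _ | _ :: _, [], hlen, _ => by simp at hlen

end Rho

theorem isLeast_sInf_of_subset_closure {D T : Set ℝ} (hD : D.Finite) (hD0 : ∀ x ∈ D, 0 ≤ x)
    (hT : T.Nonempty) (hTD : T ⊆ AddSubmonoid.closure D) : IsLeast T (sInf T) := by
  have hwf : T.IsWF := ((Set.IsPWO.addSubmonoid_closure hD0 hD.isPWO).mono hTD).isWF
  have hmin : IsLeast T (hwf.min hT) := ⟨hwf.min_mem hT, fun _ => hwf.min_le hT⟩
  rwa [hmin.csInf_eq]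

theorem isLeast_sInf_setOf_exists_eq {ι : Type*} [Finite ι] [Nonempty ι] (f : ι → ℝ) :
    IsLeast {r | ∃ i, r = f i} (sInf {r | ∃ i, r = f i}) := by
  obtain ⟨i, hi⟩ := Finite.exists_min f
  have hmin : IsLeast {r | ∃ i, r = f i} (f i) := ⟨⟨i, rfl⟩, by rintro _ ⟨j, rfl⟩; exact hi j⟩
  rwa [hmin.csInf_eq]

section Subadditive

variable {M : Type*} {D : M → M → ℝ}

theorem le_rho_of_subadditive [Monoid M] (h1 : D 1 1 ≤ 0)
    (hmul : ∀ u v u' v' : M, D (u * u') (v * v') ≤ D u v + D u' v') :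
    ∀ l m : List M, l.length = m.length → D l.prod m.prod ≤ rho D l m
  | a :: l, b :: m, h => by
    rw [List.prod_cons, List.prod_cons, rho_cons_cons]
    linarith [hmul a b l.prod m.prod, le_rho_of_subadditive h1 hmul l m (by simpa using h)]
  | [], [], _ => by simpa using h1
  | [], _ :: _, h | _ :: _, [], h => by simp at h

variable [Group M] (hself : ∀ u, D u u = 0)
  (hmul : ∀ u v u' v' : M, D (u * u') (v * v') ≤ D u v + D u' v')
include hself hmul

theorem dist_mul_left_of_subadditive (a u v : M) : D (a * u) (a * v) = D u v := by
  refine le_antisymm ?_ ?_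
  · linarith [hmul a a u v, hself a]
  · simpa [hself] using hmul a⁻¹ a⁻¹ (a * u) (a * v)

theorem dist_triangle_of_subadditive (u v w : M) : D u w ≤ D u v + D v w :=
  calc D u w = D (u * 1) (v * (v⁻¹ * w)) := by simp
    _ ≤ D u v + D 1 (v⁻¹ * w) := hmul _ _ _ _
    _ = D u v + D v w := by
      rw [← dist_mul_left_of_subadditive hself hmul v 1, mul_one, mul_inv_cancel_left]

end Subadditive

theorem IsMetricD.self_eq_zero {α : Type*} {d : α → α → ℝ} (h : IsMetricD d) (x : α) :
    d x x = 0 :=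
  (h.1 x x).2 rfl

theorem IsMetricD.nonneg {α : Type*} {d : α → α → ℝ} (h : IsMetricD d) (x y : α) :
    0 ≤ d x y := by
  linarith [h.2.2 x y x, h.self_eq_zero x, h.2.1 x y]

theorem IsMetricD.pos {α : Type*} {d : α → α → ℝ} (h : IsMetricD d) {x y : α} (hxy : x ≠ y) :
    0 < d x y :=
  (h.nonneg x y).lt_of_ne fun h0 => hxy ((h.1 x y).1 h0.symm)

section FinGen

variable {G : Type*} [Group G] {dG : G → G → ℝ} {A : Set G}

theorem IsFinGenMetric.closure_eq_top (hfg : IsFinGenMetric dG A) : Submonoid.closure A = ⊤ := by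
  refine eq_top_iff.2 fun g _ => ?_
  obtain ⟨l, -, -, hl, -, rfl, -⟩ := (hfg.2.2.2 g 1).1
  exact Submonoid.list_prod_mem _ fun x hx => Submonoid.subset_closure (hl x hx)

theorem IsFinGenMetric.dist_mul_le (hfg : IsFinGenMetric dG A) (u v u' v' : G) :
    dG (u * u') (v * v') ≤ dG u v + dG u' v' := by
  obtain ⟨l, m, hlen, hl, hm, rfl, rfl, huv⟩ := (hfg.2.2.2 u v).1
  obtain ⟨l', m', hlen', hl', hm', rfl, rfl, huv'⟩ := (hfg.2.2.2 u' v').1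
  rw [huv, huv', ← List.sum_append, ← List.zipWith_append hlen, ← List.prod_append,
    ← List.prod_append]
  refine (hfg.2.2.2 _ _).2 ⟨l ++ l', m ++ m', by simp [hlen, hlen'], ?_, ?_, rfl, rfl, rfl⟩
  · simpa [or_imp, forall_and] using And.intro hl hl'
  · simpa [or_imp, forall_and] using And.intro hm hm'

theorem IsFinGenMetric.dist_mul_left (hG : IsMetricD dG) (hfg : IsFinGenMetric dG A)
    (a u v : G) : dG (a * u) (a * v) = dG u v :=
  dist_mul_left_of_subadditive hG.self_eq_zero hfg.dist_mul_le a u v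

end FinGen

section Words

variable {G X : Type*}

theorem genSetS_finite [Finite X] {A : Set G} (hA : A.Finite) : (genSetS (X := X) A).Finite :=
  ((hA.image Sum.inl).union (Set.finite_range Sum.inr)).subset <| by
    rintro (g | t) hs
    exacts [Or.inl ⟨g, hs, rfl⟩, Or.inr ⟨t, rfl⟩]

variable [Group G]

@[simp] theorem wordProd_nil : wordProd ([] : List (Alphabet G X)) = 1 := rfl

@[simp] theorem wordProd_cons (a : Alphabet G X) (l : List (Alphabet G X)) :
    wordProd (a :: l) = toFP a * wordProd l := by
  simp [wordProd]

theorem wordProd_append (l m : List (Alphabet G X)) :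
    wordProd (l ++ m) = wordProd l * wordProd m := by
  simp [wordProd]

theorem wordProd_map_inl (l : List G) :
    wordProd (l.map (Sum.inl : G → Alphabet G X)) = Coprod.inl l.prod := by
  rw [map_list_prod, wordProd, List.map_map]
  rfl

theorem toFP_formalInv (a : Alphabet G X) : toFP (formalInv a) = (toFP a)⁻¹ := by
  rcases a with g | x | x <;> simp [toFP, formalInv]

variable {A : Set G}

theorem formalInv_mem_genSetS (hA : ∀ a ∈ A, a⁻¹ ∈ A) {s : Alphabet G X}
    (hs : s ∈ genSetS A) : formalInv s ∈ genSetS A := by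
  rcases s with g | x | x
  exacts [hA g hs, trivial, trivial]

theorem exists_wordProd_eq (hA : Submonoid.closure A = ⊤) (u : FP G X) :
    ∃ l : List (Alphabet G X), (∀ s ∈ l, s ∈ genSetS A) ∧ wordProd l = u := by
  have hmul : ∀ u v : FP G X, (∃ l : List (Alphabet G X), (∀ s ∈ l, s ∈ genSetS A) ∧
      wordProd l = u) → (∃ m : List (Alphabet G X), (∀ s ∈ m, s ∈ genSetS A) ∧
      wordProd m = v) → ∃ l : List (Alphabet G X), (∀ s ∈ l, s ∈ genSetS A) ∧
      wordProd l = u * v := by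
    rintro _ _ ⟨l, hl, rfl⟩ ⟨m, hm, rfl⟩
    exact ⟨l ++ m, by simpa [or_imp, forall_and] using And.intro hl hm, wordProd_append l m⟩
  induction u using Coprod.induction_on with
  | inl g =>
    obtain ⟨l, hl, rfl⟩ := Submonoid.exists_list_of_mem_closure (hA ▸ Submonoid.mem_top g)
    exact ⟨l.map Sum.inl, by simpa [genSetS] using hl, wordProd_map_inl l⟩
  | inr w =>
    induction w using FreeGroup.induction_on with
    | C1 => exact ⟨[], by simp, (map_one _).symm⟩
    | of x => exact ⟨[Sum.inr (Sum.inl x)], by simp [genSetS], by simp [toFP]⟩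
    | inv_of x _ => exact ⟨[Sum.inr (Sum.inr x)], by simp [genSetS], by simp [toFP]⟩
    | mul x y hx hy => simpa only [map_mul] using hmul _ _ hx hy
  | mul x y hx hy => exact hmul _ _ hx hy

end Words

section Gamma

variable {G X : Type*} [Group G] {d : Alphabet G X → Alphabet G X → ℝ} {A : Set G}

def genWordSums (d : Alphabet G X → Alphabet G X → ℝ) (A : Set G) (u v : FP G X) : Set ℝ :=
  { r | ∃ l m : List (Alphabet G X), l.length = m.length ∧
    (∀ s ∈ l, s ∈ genSetS (X := X) A) ∧ (∀ s ∈ m, s ∈ genSetS (X := X) A) ∧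
    wordProd l = u ∧ wordProd m = v ∧ r = rho d l m }

theorem gammaFG_le_rho (hd : ∀ s t, 0 ≤ d s t) {l m : List (Alphabet G X)}
    (hlen : l.length = m.length) (hl : ∀ s ∈ l, s ∈ genSetS A) (hm : ∀ s ∈ m, s ∈ genSetS A) :
    gammaFG d A (wordProd l) (wordProd m) ≤ rho d l m :=
  csInf_le ⟨0, by rintro _ ⟨l, m, -, -, -, -, -, rfl⟩; exact rho_nonneg hd l m⟩
    ⟨l, m, hlen, hl, hm, rfl, rfl, rfl⟩

theorem gammaFG_nonneg (hd : ∀ s t, 0 ≤ d s t) (u v : FP G X) : 0 ≤ gammaFG d A u v :=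
  Real.sInf_nonneg <| by rintro _ ⟨l, m, -, -, -, -, -, rfl⟩; exact rho_nonneg hd l m

theorem gammaFG_comm (hsymm : ∀ s t, d s t = d t s) (u v : FP G X) :
    gammaFG d A u v = gammaFG d A v u := by
  have swap : ∀ u v : FP G X, genWordSums d A u v ⊆ genWordSums d A v u := by
    rintro u v _ ⟨l, m, hlen, hl, hm, hu, hv, rfl⟩
    exact ⟨m, l, hlen.symm, hm, hl, hv, hu, rho_comm hsymm l m⟩
  exact congrArg sInf ((swap u v).antisymm (swap v u))

theorem gammaFG_toFP_le (hd : ∀ s t, 0 ≤ d s t) {s t : Alphabet G X} (hs : s ∈ genSetS A)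
    (ht : t ∈ genSetS A) : gammaFG d A (toFP s) (toFP t) ≤ d s t := by
  simpa [rho] using gammaFG_le_rho (d := d) hd (l := [s]) (m := [t]) rfl (by simpa) (by simpa)

theorem genWordSums_nonempty (hA : Submonoid.closure A = ⊤) (h1 : (1 : G) ∈ A)
    (u v : FP G X) : (genWordSums d A u v).Nonempty := by
  obtain ⟨l, hl, rfl⟩ := exists_wordProd_eq hA u
  obtain ⟨m, hm, rfl⟩ := exists_wordProd_eq hA v
  have hone : ∀ n, wordProd (List.replicate n (Sum.inl 1 : Alphabet G X)) = 1 := fun n => by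
    simp [wordProd, toFP]
  refine ⟨_, l ++ List.replicate m.length (Sum.inl 1), List.replicate l.length (Sum.inl 1) ++ m,
    by simp, ?_, ?_, by simp [wordProd_append, hone],
    by simp [wordProd_append, hone], rfl⟩
  · simp only [List.mem_append, List.mem_replicate]
    rintro s (hs | ⟨-, rfl⟩)
    exacts [hl s hs, h1]
  · simp only [List.mem_append, List.mem_replicate]
    rintro s (⟨-, rfl⟩ | hs)
    exacts [h1, hm s hs]

theorem gammaFG_self (hA : Submonoid.closure A = ⊤) (hd : ∀ s t, 0 ≤ d s t)
    (hself : ∀ s, d s s = 0) (u : FP G X) : gammaFG d A u u = 0 := by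
  obtain ⟨l, hl, rfl⟩ := exists_wordProd_eq hA u
  exact le_antisymm (rho_self hself l ▸ gammaFG_le_rho hd rfl hl hl) (gammaFG_nonneg hd _ _)

variable [Finite X] (hAfin : A.Finite) (hA : Submonoid.closure A = ⊤) (h1 : (1 : G) ∈ A)
  (hd : ∀ s t, 0 ≤ d s t)
include hAfin hA h1 hd

theorem gammaFG_isLeast (u v : FP G X) : IsLeast (genWordSums d A u v) (gammaFG d A u v) :=
  isLeast_sInf_of_subset_closure ((genSetS_finite hAfin).image2 d (genSetS_finite hAfin))
    (by rintro _ ⟨s, -, t, -, rfl⟩; exact hd s t) (genWordSums_nonempty hA h1 u v)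
    (by rintro _ ⟨l, m, -, hl, hm, -, -, rfl⟩; exact rho_mem_closure hl hm)

theorem gammaFG_mul_le (u v u' v' : FP G X) :
    gammaFG d A (u * u') (v * v') ≤ gammaFG d A u v + gammaFG d A u' v' := by
  obtain ⟨l, m, hlen, hl, hm, rfl, rfl, huv⟩ := (gammaFG_isLeast hAfin hA h1 hd u v).1
  obtain ⟨l', m', hlen', hl', hm', rfl, rfl, huv'⟩ := (gammaFG_isLeast hAfin hA h1 hd u' v').1
  rw [huv, huv', ← rho_append _ _ hlen, ← wordProd_append, ← wordProd_append]
  exact gammaFG_le_rho hd (by simp [hlen, hlen'])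
    (by simpa [or_imp, forall_and] using And.intro hl hl')
    (by simpa [or_imp, forall_and] using And.intro hm hm')

theorem gammaFG_list_prod_le {l m : List (FP G X)} (hlen : l.length = m.length) :
    gammaFG d A l.prod m.prod ≤ rho (gammaFG d A) l m :=
  le_rho_of_subadditive (gammaFG_le_rho hd (l := []) (m := []) rfl (by simp) (by simp))
    (gammaFG_mul_le hAfin hA h1 hd) l m hlen

theorem gammaFG_isMetric (hself : ∀ s, d s s = 0) (hsymm : ∀ s t, d s t = d t s)
    (hzero : ∀ s t, d s t = 0 → s = t) : IsMetricD (gammaFG d A) := by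
  have hγself := gammaFG_self hA hd hself
  refine ⟨fun u v => ⟨fun h0 => ?_, fun h => h ▸ hγself u⟩, gammaFG_comm hsymm,
    dist_triangle_of_subadditive hγself (gammaFG_mul_le hAfin hA h1 hd)⟩
  obtain ⟨l, m, hlen, -, -, rfl, rfl, hr⟩ := (gammaFG_isLeast hAfin hA h1 hd u v).1
  rw [eq_of_rho_eq_zero hd hzero hlen (hr ▸ h0)]

theorem gammaFG_isFinGenMetric (hAinv : ∀ a ∈ A, a⁻¹ ∈ A) :
    IsFinGenMetric (gammaFG d A) (toFP '' genSetS (X := X) A) := by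
  refine ⟨(genSetS_finite hAfin).image _, ⟨Sum.inl 1, h1, map_one _⟩, ?_, fun u v => ⟨?_, ?_⟩⟩
  · rintro _ ⟨s, hs, rfl⟩
    exact ⟨formalInv s, formalInv_mem_genSetS hAinv hs, toFP_formalInv s⟩
  · obtain ⟨l, m, hlen, hl, hm, rfl, rfl, hr⟩ := (gammaFG_isLeast hAfin hA h1 hd u v).1
    refine ⟨l.map toFP, m.map toFP, by simp [hlen],
      List.forall_mem_map.2 fun s hs => ⟨s, hl s hs, rfl⟩,
      List.forall_mem_map.2 fun s hs => ⟨s, hm s hs, rfl⟩, rfl, rfl, le_antisymm ?_ ?_⟩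
    · exact gammaFG_list_prod_le hAfin hA h1 hd (by simpa using hlen)
    · rw [hr]
      refine (rho_map toFP l m).trans_le (rho_le_rho fun s hs t ht => ?_)
      exact gammaFG_toFP_le hd (hl s hs) (hm t ht)
  · rintro _ ⟨l, m, hlen, -, -, rfl, rfl, rfl⟩
    exact gammaFG_list_prod_le hAfin hA h1 hd hlen

theorem graevDelta_eq_gammaFG (hcol : ∀ s t, gammaFG d A (toFP s) (toFP t) ≤ d s t)
    (u v : FP G X) : graevDelta d u v = gammaFG d A u v := by
  obtain ⟨_, l, m, hlen, -, -, rfl, rfl, rfl⟩ := genWordSums_nonempty (d := d) hA h1 u v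
  refine le_antisymm (csInf_le_csInf ?_ (genWordSums_nonempty hA h1 _ _) ?_) (le_csInf ?_ ?_)
  · exact ⟨0, by rintro _ ⟨l, m, -, -, -, rfl⟩; exact rho_nonneg hd l m⟩
  · rintro _ ⟨l, m, hlen, -, -, hu, hv, rfl⟩
    exact ⟨l, m, hlen, hu, hv, rfl⟩
  · exact ⟨_, l, m, hlen, rfl, rfl, rfl⟩
  · rintro _ ⟨l', m', hlen', hu, hv, rfl⟩
    rw [← hu, ← hv]
    exact (gammaFG_list_prod_le hAfin hA h1 hd (by simpa using hlen')).trans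
      ((rho_map toFP l' m').trans_le (rho_le_rho fun s _ t _ => hcol s t))

end Gamma

section AmalgamLetters

variable {G X : Type*} [Group G] {dG : G → G → ℝ} {A : Set G} {d' : (↥A ⊕ X) → (↥A ⊕ X) → ℝ}
  (hG : IsMetricD dG) (hfg : IsFinGenMetric dG A) (h' : IsMetricD d')

local notation "dS" => extD (amalgD dG A d')

include hfg in
theorem isLeast_amalgD_inr_inl (x : X) (g : G) :
    IsLeast {r | ∃ g₀ : A, r = d' (Sum.inr x) (Sum.inl g₀) + dG g₀ g}
      (amalgD dG A d' (Sum.inr x) (Sum.inl g)) :=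
  haveI : Finite A := hfg.1.to_subtype
  haveI : Nonempty A := ⟨⟨1, hfg.2.1⟩⟩
  isLeast_sInf_setOf_exists_eq _

include hG hfg in
theorem amalgD_inr_inl_le (x : X) (g₀ : A) :
    amalgD dG A d' (Sum.inr x) (Sum.inl g₀) ≤ d' (Sum.inr x) (Sum.inl g₀) :=
  (isLeast_amalgD_inr_inl hfg x g₀).2 ⟨g₀, by rw [hG.self_eq_zero, add_zero]⟩

include hG hfg h' in
theorem exists_pos_le_amalgD_inr_inl (x : X) :
    ∃ ε > 0, ∀ g : G, ε ≤ amalgD dG A d' (Sum.inr x) (Sum.inl g) := by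
  have : Finite A := hfg.1.to_subtype
  have : Nonempty A := ⟨⟨1, hfg.2.1⟩⟩
  obtain ⟨g₁, hg₁⟩ := Finite.exists_min fun g₀ : A => d' (Sum.inr x) (Sum.inl g₀)
  refine ⟨d' (Sum.inr x) (Sum.inl g₁), h'.pos Sum.inr_ne_inl, fun g => ?_⟩
  obtain ⟨g₀, hg₀⟩ := (isLeast_amalgD_inr_inl hfg x g).1
  linarith [hg₁ g₀, hG.nonneg g₀ g]

include hG hfg h' in
theorem amalgD_inr_inl_pos (x : X) (g : G) : 0 < amalgD dG A d' (Sum.inr x) (Sum.inl g) := by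
  obtain ⟨ε, hε, hle⟩ := exists_pos_le_amalgD_inr_inl hG hfg h' x
  exact hε.trans_le (hle g)

include hG hfg h' in
theorem extD_inr_inl_inr_inr_pos (x y : X) :
    0 < dS (Sum.inr (Sum.inl x)) (Sum.inr (Sum.inr y)) := by
  obtain ⟨ε, hε, hx⟩ := exists_pos_le_amalgD_inr_inl hG hfg h' x
  obtain ⟨δ, hδ, hy⟩ := exists_pos_le_amalgD_inr_inl hG hfg h' y
  refine (add_pos hε hδ).trans_le (le_csInf ⟨_, 1, rfl⟩ ?_)
  rintro _ ⟨c, rfl⟩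
  exact add_le_add (hx c) (hy c⁻¹)

include hG h' in
theorem extD_self (s : Alphabet G X) : dS s s = 0 := by
  rcases s with g | x | x
  exacts [hG.self_eq_zero g, h'.self_eq_zero _, h'.self_eq_zero _]

include hG h' in
theorem extD_comm (s t : Alphabet G X) : dS s t = dS t s := by
  rcases s with g | x | x <;> rcases t with h | y | y <;>
    first | rfl | exact hG.2.1 _ _ | exact h'.2.1 _ _

include hG hfg h' in
theorem extD_nonneg (s t : Alphabet G X) : 0 ≤ dS s t := by
  rcases s with g | x | x <;> rcases t with h | y | y <;>
    first
    | exact hG.nonneg _ _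
    | exact h'.nonneg _ _
    | exact (amalgD_inr_inl_pos hG hfg h' _ _).le
    | exact (extD_inr_inl_inr_inr_pos hG hfg h' _ _).le

include hG hfg h' in
theorem eq_of_extD_eq_zero {s t : Alphabet G X} (h0 : dS s t = 0) : s = t := by
  rcases s with g | x | x <;> rcases t with h | y | y <;>
    first
    | exact congrArg Sum.inl ((hG.1 g h).1 h0)
    | exact congrArg Sum.inr (congrArg _ (Sum.inr_injective ((h'.1 _ _).1 h0)))
    | exact absurd h0 (amalgD_inr_inl_pos hG hfg h' _ _).ne'
    | exact absurd h0 (extD_inr_inl_inr_inr_pos hG hfg h' _ _).ne'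

include hG hfg h' in
theorem gammaFG_inl_inl_le (g h : G) :
    gammaFG dS A (toFP (Sum.inl g)) (toFP (Sum.inl h)) ≤ dG g h := by
  obtain ⟨l, m, hlen, hl, hm, rfl, rfl, hr⟩ := (hfg.2.2.2 g h).1
  calc gammaFG dS A (toFP (Sum.inl l.prod)) (toFP (Sum.inl m.prod))
      = gammaFG dS A (wordProd (l.map Sum.inl)) (wordProd (m.map Sum.inl)) := by
        rw [wordProd_map_inl, wordProd_map_inl]; rfl
    _ ≤ rho dS (l.map Sum.inl) (m.map Sum.inl) :=
      gammaFG_le_rho (extD_nonneg hG hfg h') (by simpa using hlen) (List.forall_mem_map.2 hl)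
        (List.forall_mem_map.2 hm)
    _ = dG l.prod m.prod := by rw [rho_map, hr]; rfl

variable [Finite X]

include hG hfg h' in
theorem gammaFG_inl_inr_inl_le (g : G) (x : X) :
    gammaFG dS A (toFP (Sum.inl g)) (toFP (Sum.inr (Sum.inl x))) ≤
      dS (Sum.inl g) (Sum.inr (Sum.inl x)) := by
  obtain ⟨g₀, hg₀⟩ := (isLeast_amalgD_inr_inl (d' := d') hfg x g).1
  have hd := extD_nonneg hG hfg h'
  calc gammaFG dS A (toFP (Sum.inl g)) (toFP (Sum.inr (Sum.inl x)))
      = gammaFG dS A (toFP (Sum.inl (g₀ : G)) * toFP (Sum.inl ((g₀ : G)⁻¹ * g)))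
          (toFP (Sum.inr (Sum.inl x)) * toFP (Sum.inl 1)) := by
        simp only [toFP, ← map_mul, mul_inv_cancel_left, map_one, mul_one]
    _ ≤ gammaFG dS A (toFP (Sum.inl (g₀ : G))) (toFP (Sum.inr (Sum.inl x))) +
          gammaFG dS A (toFP (Sum.inl ((g₀ : G)⁻¹ * g))) (toFP (Sum.inl 1)) :=
      gammaFG_mul_le hfg.1 hfg.closure_eq_top hfg.2.1 hd _ _ _ _
    _ ≤ d' (Sum.inr x) (Sum.inl g₀) + dG g₀ g := by
      refine add_le_add ((gammaFG_toFP_le (t := Sum.inr (Sum.inl x)) hd g₀.2 trivial).trans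
        (amalgD_inr_inl_le hG hfg x g₀)) ((gammaFG_inl_inl_le hG hfg h' _ _).trans_eq ?_)
      rw [← hfg.dist_mul_left hG g₀ ((g₀ : G)⁻¹ * g) 1, mul_inv_cancel_left, mul_one, hG.2.1]
    _ = dS (Sum.inl g) (Sum.inr (Sum.inl x)) := hg₀.symm

include hG hfg h' in
theorem gammaFG_inl_inr_inr_le (g : G) (x : X) :
    gammaFG dS A (toFP (Sum.inl g)) (toFP (Sum.inr (Sum.inr x))) ≤
      dS (Sum.inl g) (Sum.inr (Sum.inr x)) := by
  obtain ⟨g₀, hg₀⟩ := (isLeast_amalgD_inr_inl (d' := d') hfg x g⁻¹).1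
  have hd := extD_nonneg hG hfg h'
  calc gammaFG dS A (toFP (Sum.inl g)) (toFP (Sum.inr (Sum.inr x)))
      = gammaFG dS A (toFP (Sum.inl (g * g₀)) * toFP (Sum.inl (g₀ : G)⁻¹))
          (toFP (Sum.inl 1) * toFP (Sum.inr (Sum.inr x))) := by
        simp only [toFP, ← map_mul, mul_inv_cancel_right, map_one, one_mul]
    _ ≤ gammaFG dS A (toFP (Sum.inl (g * g₀))) (toFP (Sum.inl 1)) +
          gammaFG dS A (toFP (Sum.inl (g₀ : G)⁻¹)) (toFP (Sum.inr (Sum.inr x))) :=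
      gammaFG_mul_le hfg.1 hfg.closure_eq_top hfg.2.1 hd _ _ _ _
    _ ≤ dG g₀ g⁻¹ + d' (Sum.inr x) (Sum.inl g₀) := by
      refine add_le_add ((gammaFG_inl_inl_le hG hfg h' _ _).trans_eq ?_)
        ((gammaFG_toFP_le (t := Sum.inr (Sum.inr x)) hd (hfg.2.2.1 _ g₀.2) trivial).trans ?_)
      · rw [← hfg.dist_mul_left hG g⁻¹ (g * g₀) 1, inv_mul_cancel_left, mul_one]
      · show amalgD dG A d' (Sum.inl (g₀ : G)⁻¹⁻¹) (Sum.inr x) ≤ _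
        rw [inv_inv]
        exact amalgD_inr_inl_le hG hfg x g₀
    _ = dS (Sum.inl g) (Sum.inr (Sum.inr x)) := by rw [add_comm]; exact hg₀.symm

include hG hfg h' in
theorem gammaFG_toFP_le_extD (s t : Alphabet G X) : gammaFG dS A (toFP s) (toFP t) ≤ dS s t := by
  have hd := extD_nonneg hG hfg h'
  have hsymm := extD_comm hG h'
  rcases s with g | x | x <;> rcases t with h | y | y
  · exact gammaFG_inl_inl_le hG hfg h' g h
  · exact gammaFG_inl_inr_inl_le hG hfg h' g y
  · exact gammaFG_inl_inr_inr_le hG hfg h' g y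
  · rw [gammaFG_comm hsymm, hsymm]
    exact gammaFG_inl_inr_inl_le hG hfg h' h x
  · exact gammaFG_toFP_le hd trivial trivial
  · exact gammaFG_toFP_le hd trivial trivial
  · rw [gammaFG_comm hsymm, hsymm]
    exact gammaFG_inl_inr_inr_le hG hfg h' h x
  · exact gammaFG_toFP_le hd trivial trivial
  · exact gammaFG_toFP_le hd trivial trivial

end AmalgamLetters

theorem gamma_eq_graevDelta_general {G X : Type*} [Group G] [Fintype X]
    (dG : G → G → ℝ) (A : Set G)
    (hG : IsMetricD dG) (hfg : IsFinGenMetric dG A)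
    (d' : (↥A ⊕ X) → (↥A ⊕ X) → ℝ) (h' : IsMetricD d') :
    (∀ u v : FP G X,
      gammaFG (extD (amalgD dG A d')) A u v = graevDelta (extD (amalgD dG A d')) u v) ∧
    (∀ u v : FP G X,
      IsLeast { r | ∃ l m : List (Alphabet G X), l.length = m.length ∧
          (∀ s ∈ l, s ∈ genSetS (X := X) A) ∧ (∀ s ∈ m, s ∈ genSetS (X := X) A) ∧
          wordProd l = u ∧ wordProd m = v ∧ r = rho (extD (amalgD dG A d')) l m }
        (gammaFG (extD (amalgD dG A d')) A u v)) ∧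
    IsMetricD (graevDelta (extD (amalgD dG A d'))) ∧
    IsFinGenMetric (graevDelta (extD (amalgD dG A d')))
      (toFP '' genSetS (X := X) A) := by
  have hd := extD_nonneg hG hfg h'
  have hδγ : graevDelta (extD (amalgD dG A d')) = gammaFG (extD (amalgD dG A d')) A :=
    funext₂ <| graevDelta_eq_gammaFG hfg.1 hfg.closure_eq_top hfg.2.1 hd
      (gammaFG_toFP_le_extD hG hfg h')
  rw [hδγ]
  exact ⟨fun _ _ => rfl, gammaFG_isLeast hfg.1 hfg.closure_eq_top hfg.2.1 hd,
    gammaFG_isMetric hfg.1 hfg.closure_eq_top hfg.2.1 hd (extD_self hG h') (extD_comm hG h')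
      fun _ _ => eq_of_extD_eq_zero hG hfg h',
    gammaFG_isFinGenMetric hfg.1 hfg.closure_eq_top hfg.2.1 hd hfg.2.2.1⟩

/-- In the finitely generated setting, the metric `γ` generated by the
values of `d` on pairs from `A_G ⊔ X ⊔ X⁻¹` coincides with the Graev metric `δ`, the
infimum in the definition of `γ` is attained, and `δ` is a finitely generated metric on
`G ∗ F(X)` with generating set `A_G ⊔ X ⊔ X⁻¹`. -/
theorem gamma_eq_graevDelta {G X : Type*} [Group G] [Fintype X]
    (dG : G → G → ℝ) (A : Set G) (dX : X → X → ℝ)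
    (hG : IsMetricD dG) (hfg : IsFinGenMetric dG A) (hX : IsMetricD dX)
    (d' : (↥A ⊕ X) → (↥A ⊕ X) → ℝ) (h' : IsMetricD d')
    (hextG : ∀ a b : A, d' (Sum.inl a) (Sum.inl b) = dG (a : G) (b : G))
    (hextX : ∀ x y : X, d' (Sum.inr x) (Sum.inr y) = dX x y) :
    (∀ u v : FP G X,
      gammaFG (extD (amalgD dG A d')) A u v = graevDelta (extD (amalgD dG A d')) u v) ∧
    (∀ u v : FP G X,
      IsLeast { r | ∃ l m : List (Alphabet G X), l.length = m.length ∧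
          (∀ s ∈ l, s ∈ genSetS (X := X) A) ∧ (∀ s ∈ m, s ∈ genSetS (X := X) A) ∧
          wordProd l = u ∧ wordProd m = v ∧ r = rho (extD (amalgD dG A d')) l m }
        (gammaFG (extD (amalgD dG A d')) A u v)) ∧
    IsMetricD (graevDelta (extD (amalgD dG A d'))) ∧
    IsFinGenMetric (graevDelta (extD (amalgD dG A d')))
      (toFP '' genSetS (X := X) A) :=
  gamma_eq_graevDelta_general dG A hG hfg d' h'
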